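/- arXiv:0809.3778 — 5 statements merged into one kernel-verified Lean document; each statement's English description precedes it below -/
import Mathlib

section
/- If Y and Z are comonotone random variables (i.e., (Y(ω₁) - Y(ω₂))(Z(ω₁) - Z(ω₂)) ≥ 0 for P⊗P-almost all (ω₁, ω₂)), then there exist nondecreasing functions h_Y and h_Z with h_Y(x) + h_Z(x) = x for all x, such that Y = h_Y(Y + Z) and Z = h_Z(Y + Z) almost surely. -/
/-!
Push `P` forward along `ω ↦ (Y ω, Z ω)` to a measure `μ` on `ℝ × ℝ`. Comonotonicity says that
`μ ⊗ μ`-almost every pair of points is comparable in the product order. The points `p` of the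
support of `μ` that are comparable with `μ`-almost every point form a conull set `S`, and `S` is a
chain: incomparability is an open relation, so a point of the support incomparable with `p` would
make that exceptional set of positive measure. On a chain the sum `p.1 + p.2` determines `p`, and `p.1 + p.2 ↦ p.1`
extends to a function `h` on `ℝ` that is monotone with `x ↦ x - h x` monotone; take `hY = h`,
`hZ = id - h`.
-/

open MeasureTheory Filter Topology Set

theorem MeasureTheory.Measure.exists_mem_ae_forall_rel_of_ae_prod {X : Type*}
    [TopologicalSpace X] [HereditarilyLindelofSpace X] [MeasurableSpace X]
    (μ : Measure X) [SFinite μ] {r : X → X → Prop} (hr : IsClosed {z : X × X | r z.1 z.2})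
    (h : ∀ᵐ z ∂μ.prod μ, r z.1 z.2) :
    ∃ S ∈ ae μ, ∀ p ∈ S, ∀ q ∈ S, r p q := by
  refine ⟨{p | ∀ᵐ q ∂μ, r p q} ∩ μ.support,
    inter_mem (Measure.ae_ae_of_ae_prod h) μ.support_mem_ae, ?_⟩
  rintro p ⟨hp, -⟩ q ⟨-, hq⟩
  by_contra hpq
  have hnhds : {q | ¬ r p q} ∈ 𝓝 q :=
    (hr.preimage (Continuous.prodMk_right p)).isOpen_compl.mem_nhds hpq
  exact ((μ.mem_support_iff_forall q).1 hq _ hnhds).ne' (ae_iff.1 hp)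

theorem Prod.le_total_of_mul_sub_nonneg {p q : ℝ × ℝ}
    (h : 0 ≤ (p.1 - q.1) * (p.2 - q.2)) : p ≤ q ∨ q ≤ p := by
  rcases mul_nonneg_iff.1 h with ⟨h₁, h₂⟩ | ⟨h₁, h₂⟩
  · exact Or.inr ⟨sub_nonneg.1 h₁, sub_nonneg.1 h₂⟩
  · exact Or.inl ⟨sub_nonpos.1 h₁, sub_nonpos.1 h₂⟩

/-- For a chain `S` in `ℝ × ℝ`, the largest extension of `p.1 + p.2 ↦ p.1` (`p ∈ S`) that is
monotone with `x ↦ x - h x` monotone: each `q ∈ S` forces `h x ≤ max q.1 (x - q.2)`. -/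
noncomputable def Set.fstOfSum (S : Set (ℝ × ℝ)) (x : ℝ) : ℝ :=
  ⨅ q : S, max q.1.1 (x - q.1.2)

namespace IsChain

variable {S : Set (ℝ × ℝ)}

theorem bddBelow_range_max_sub (hS : IsChain (· ≤ ·) S) {p : ℝ × ℝ} (hp : p ∈ S) (x : ℝ) :
    BddBelow (range fun q : S => max q.1.1 (x - q.1.2)) := by
  refine ⟨min p.1 (x - p.2), ?_⟩
  rintro _ ⟨⟨q, hq⟩, rfl⟩
  rcases hS.total hp hq with hpq | hqp
  · exact (min_le_left _ _).trans (le_max_of_le_left hpq.1)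
  · exact (min_le_right _ _).trans (le_max_of_le_right (by linarith [hqp.2]))

theorem fstOfSum_add_eq (hS : IsChain (· ≤ ·) S) {p : ℝ × ℝ} (hp : p ∈ S) :
    S.fstOfSum (p.1 + p.2) = p.1 := by
  have : Nonempty S := ⟨⟨p, hp⟩⟩
  refine le_antisymm ?_ (le_ciInf fun ⟨q, hq⟩ => ?_)
  · calc S.fstOfSum (p.1 + p.2) ≤ max p.1 (p.1 + p.2 - p.2) :=
          ciInf_le (hS.bddBelow_range_max_sub hp _) ⟨p, hp⟩
      _ = p.1 := by simp
  · rcases hS.total hp hq with hpq | hqp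
    · exact le_max_of_le_left hpq.1
    · exact le_max_of_le_right (by linarith [hqp.2])

theorem monotone_fstOfSum (hS : IsChain (· ≤ ·) S) (hne : S.Nonempty) :
    Monotone S.fstOfSum := by
  obtain ⟨p, hp⟩ := hne
  exact fun x y hxy =>
    ciInf_mono (hS.bddBelow_range_max_sub hp x) fun q => max_le_max le_rfl (by linarith)

theorem monotone_sub_fstOfSum (hS : IsChain (· ≤ ·) S) (hne : S.Nonempty) :
    Monotone fun x => x - S.fstOfSum x := by
  obtain ⟨p, hp⟩ := hne
  have : Nonempty S := ⟨⟨p, hp⟩⟩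
  intro x y hxy
  suffices S.fstOfSum y - (y - x) ≤ S.fstOfSum x by dsimp only; linarith
  refine le_ciInf fun q => ?_
  calc S.fstOfSum y - (y - x) ≤ max q.1.1 (y - q.1.2) - (y - x) := by
        gcongr; exact ciInf_le (hS.bddBelow_range_max_sub hp y) q
    _ ≤ max q.1.1 (x - q.1.2) := by
        rw [sub_le_iff_le_add]
        exact max_le (by linarith [le_max_left q.1.1 (x - q.1.2)])
          (by linarith [le_max_right q.1.1 (x - q.1.2)])

end IsChain

/-- If `Y` and `Z` are comonotone random variables, then there exist nondecreasing
functions `hY`, `hZ` with `hY x + hZ x = x` such that `Y = hY ∘ (Y + Z)` and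
`Z = hZ ∘ (Y + Z)` almost surely. -/
theorem stmt_0 {Ω : Type*} [MeasurableSpace Ω] (P : Measure Ω) [IsProbabilityMeasure P]
    (Y Z : Ω → ℝ) (hYm : Measurable Y) (hZm : Measurable Z)
    (hcom : ∀ᵐ p ∂(P.prod P), 0 ≤ (Y p.1 - Y p.2) * (Z p.1 - Z p.2)) :
    ∃ hY hZ : ℝ → ℝ, Monotone hY ∧ Monotone hZ ∧ (∀ x : ℝ, hY x + hZ x = x) ∧
      (∀ᵐ ω ∂P, Y ω = hY (Y ω + Z ω)) ∧ (∀ᵐ ω ∂P, Z ω = hZ (Y ω + Z ω)) := by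
  set g : Ω → ℝ × ℝ := fun ω => (Y ω, Z ω)
  have hg : Measurable g := hYm.prodMk hZm
  have hcom' : ∀ᵐ z ∂(P.map g).prod (P.map g), 0 ≤ (z.1.1 - z.2.1) * (z.1.2 - z.2.2) := by
    rw [Measure.map_prod_map _ _ hg hg,
      ae_map_iff (hg.prodMap hg).aemeasurable (measurableSet_le measurable_const (by fun_prop))]
    exact hcom
  obtain ⟨S, hS_ae, hS⟩ := (P.map g).exists_mem_ae_forall_rel_of_ae_prod
    (r := fun p q => 0 ≤ (p.1 - q.1) * (p.2 - q.2))
    (isClosed_le continuous_const (by fun_prop)) hcom'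
  have hchain : IsChain (· ≤ ·) S := fun p hp q hq _ =>
    Prod.le_total_of_mul_sub_nonneg (hS p hp q hq)
  have : IsProbabilityMeasure (P.map g) := Measure.isProbabilityMeasure_map hg.aemeasurable
  have hne : S.Nonempty := (ae (P.map g)).nonempty_of_mem hS_ae
  have hY : ∀ᵐ ω ∂P, Y ω = S.fstOfSum (Y ω + Z ω) := by
    filter_upwards [ae_of_ae_map hg.aemeasurable hS_ae] with ω hω
    exact (hchain.fstOfSum_add_eq hω).symm
  refine ⟨S.fstOfSum, fun x => x - S.fstOfSum x, hchain.monotone_fstOfSum hne,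
    hchain.monotone_sub_fstOfSum hne, fun x => add_sub_cancel _ _, hY, ?_⟩
  filter_upwards [hY] with ω hω
  rw [← hω, add_sub_cancel_left]
end

section
/- Suppose n agents have valuation functionals V_i(Y) = (1+b_i)H_{g_i}(Y) + c_i·E[Y] and there exist indices i, j with 1 + b_i + c_i ≠ 0 and (1 + b_i + c_i)(1 + b_j + c_j) ≤ 0. Then no Pareto optimal allocation exists: for every allocation Y = (Y₁,...,Yₙ) with ΣY_k = X and all V_k(Y_k) finite, there exists another allocation Z with ΣZ_k = X, V_k(Z_k) ≤ V_k(Y_k) for all k, and strict inequality for some k. -/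
/-!
Cash equivariance makes deterministic side payments act linearly: paying `d k` to agent `k`
shifts `V k` by `mₖ d k`, where `mₖ = 1 + bₖ + cₖ`. Moving the amount `mᵢ` from agent `i` to
agent `j` keeps the total risk, lowers `V i` by `mᵢ² > 0` and changes `V j` by `mᵢ mⱼ ≤ 0`.
-/

open Finset

section SidePayments

variable {Ω ι : Type*}

lemma exists_improvement_of_side_payments [Fintype ι] (V : ι → (Ω → ℝ) → ℝ) (m : ι → ℝ)
    (hcash : ∀ k (Y : Ω → ℝ) (a : ℝ), V k (fun ω => Y ω + a) = V k Y + m k * a)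
    (Y : ι → Ω → ℝ) (d : ι → ℝ) (hd : ∑ k, d k = 0)
    (hle : ∀ k, m k * d k ≤ 0) (hlt : ∃ k, m k * d k < 0) :
    ∃ Z : ι → Ω → ℝ, (∀ ω, ∑ k, Z k ω = ∑ k, Y k ω) ∧
      (∀ k, V k (Z k) ≤ V k (Y k)) ∧ ∃ k, V k (Z k) < V k (Y k) := by
  refine ⟨fun k ω => Y k ω + d k, fun ω => ?_, fun k => ?_, ?_⟩
  · rw [sum_add_distrib, hd, add_zero]
  · simpa [hcash] using hle k
  · obtain ⟨k, hk⟩ := hlt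
    exact ⟨k, by simpa [hcash] using hk⟩

variable [DecidableEq ι]

lemma sum_transfer [Fintype ι] (i j : ι) (a : ℝ) : ∑ k, (Pi.single j a - Pi.single i a : ι → ℝ) k = 0 := by
  simp

lemma mul_transfer_self {i j : ι} (hij : i ≠ j) (m : ι → ℝ) :
    m i * (Pi.single j (m i) - Pi.single i (m i) : ι → ℝ) i = -(m i * m i) := by
  simp [hij]

lemma mul_transfer_nonpos {i j : ι} (hij : i ≠ j) (m : ι → ℝ) (h : m i * m j ≤ 0) (k : ι) :
    m k * (Pi.single j (m i) - Pi.single i (m i) : ι → ℝ) k ≤ 0 := by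
  by_cases hki : k = i
  · subst hki
    rw [mul_transfer_self hij]
    exact neg_nonpos.mpr (mul_self_nonneg _)
  by_cases hkj : k = j
  · subst hkj
    simpa [hki, mul_comm] using h
  · simp [hki, hkj]

end SidePayments

/-- If the `1 + bᵢ + cᵢ` have different signs (or one is zero and another nonzero),
then no Pareto optimal allocation exists: every allocation can be strictly improved. -/
theorem stmt_6 {Ω : Type*} (n : ℕ) (X : Ω → ℝ) (b c : Fin n → ℝ)
    (V : Fin n → (Ω → ℝ) → ℝ)
    (hcash : ∀ (k : Fin n) (Y : Ω → ℝ) (a : ℝ),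
      V k (fun ω => Y ω + a) = V k Y + (1 + b k + c k) * a)
    (i j : Fin n) (hi : 1 + b i + c i ≠ 0)
    (hij : (1 + b i + c i) * (1 + b j + c j) ≤ 0) :
    ∀ Y : Fin n → Ω → ℝ, (∀ ω, ∑ k, Y k ω = X ω) →
      ∃ Z : Fin n → Ω → ℝ, (∀ ω, ∑ k, Z k ω = X ω) ∧
        (∀ k, V k (Z k) ≤ V k (Y k)) ∧ ∃ k, V k (Z k) < V k (Y k) := by
  intro Y hY
  set m : Fin n → ℝ := fun k => 1 + b k + c k
  have hne : i ≠ j := by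
    rintro rfl
    exact hi (mul_self_eq_zero.mp (le_antisymm hij (mul_self_nonneg _)))
  obtain ⟨Z, hsum, hle, hlt⟩ := exists_improvement_of_side_payments V m hcash Y
    (Pi.single j (m i) - Pi.single i (m i)) (sum_transfer i j (m i))
    (mul_transfer_nonpos hne m hij)
    ⟨i, by rw [mul_transfer_self hne]; exact neg_neg_of_pos (mul_self_pos.mpr hi)⟩
  exact ⟨Z, fun ω => (hsum ω).trans (hY ω), hle, hlt⟩
end

section
/- If X* = (X*₁,...,X*ₙ) is a Pareto optimal allocation of X, then for any β ∈ ℝ and any indices j ≠ k, the allocation obtained by replacing X*_j by X*_j + β and X*_k by X*_k − β is also Pareto optimal. -/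
open Finset

section CashAdditivity

variable {ι Ω : Type*} [Fintype ι]

def IsAllocation (X : Ω → ℝ) (Z : ι → Ω → ℝ) : Prop :=
  ∀ ω, ∑ i, Z i ω = X ω

def IsParetoOptimal (V : ι → (Ω → ℝ) → ℝ) (X : Ω → ℝ) (Z : ι → Ω → ℝ) : Prop :=
  ∀ Y : ι → Ω → ℝ, IsAllocation X Y → (∀ i, V i (Y i) ≤ V i (Z i)) → ∀ i, V i (Y i) = V i (Z i)

lemma IsAllocation.add_const {X : Ω → ℝ} {Z : ι → Ω → ℝ} (hZ : IsAllocation X Z) {δ : ι → ℝ}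
    (hδ : ∑ i, δ i = 0) : IsAllocation X (fun i ω => Z i ω + δ i) := by
  intro ω
  rw [sum_add_distrib, hδ, add_zero, hZ ω]

/-- Under cash additivity a zero-sum constant transfer moves every utility by a fixed amount, so
an allocation dominating the shifted one would, shifted back, dominate the original one. -/
theorem IsParetoOptimal.add_const {V : ι → (Ω → ℝ) → ℝ} {m : ι → ℝ}
    (hcash : ∀ i Y (a : ℝ), V i (fun ω => Y ω + a) = V i Y + m i * a)
    {X : Ω → ℝ} {Z : ι → Ω → ℝ} (hZ : IsParetoOptimal V X Z) {δ : ι → ℝ}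
    (hδ : ∑ i, δ i = 0) : IsParetoOptimal V X (fun i ω => Z i ω + δ i) := by
  intro Y hY hle i
  have hY' : IsAllocation X (fun i ω => Y i ω + -δ i) :=
    hY.add_const (by rw [sum_neg_distrib, hδ, neg_zero])
  have hle' : ∀ i, V i (fun ω => Y i ω + -δ i) ≤ V i (Z i) := fun i => by
    have := hle i
    rw [hcash] at this ⊢
    linarith
  have heq := hZ _ hY' hle' i
  rw [hcash] at heq ⊢
  linarith

lemma sum_transfer_eq_zero [DecidableEq ι] (β : ℝ) (j k : ι) :
    ∑ i, ((if i = j then β else 0) - (if i = k then β else 0)) = 0 := by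
  simp [sum_sub_distrib]

end CashAdditivity

theorem stmt_7_general {Ω : Type*} (n : ℕ) (X : Ω → ℝ) (b c : Fin n → ℝ)
    (V : Fin n → (Ω → ℝ) → ℝ)
    (hcash : ∀ (i : Fin n) (Y : Ω → ℝ) (a : ℝ),
      V i (fun ω => Y ω + a) = V i Y + (1 + b i + c i) * a)
    (Xstar : Fin n → Ω → ℝ) (hsum : ∀ ω, ∑ i, Xstar i ω = X ω)
    (hPO : ∀ Y : Fin n → Ω → ℝ, (∀ ω, ∑ i, Y i ω = X ω) →
      (∀ i, V i (Y i) ≤ V i (Xstar i)) → ∀ i, V i (Y i) = V i (Xstar i))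
    (β : ℝ) (j k : Fin n) :
    (∀ ω, ∑ i, (fun i ω => Xstar i ω + (if i = j then β else 0) - (if i = k then β else 0)) i ω
        = X ω) ∧
    (∀ Y : Fin n → Ω → ℝ, (∀ ω, ∑ i, Y i ω = X ω) →
      (∀ i, V i (Y i) ≤
        V i ((fun i ω => Xstar i ω + (if i = j then β else 0) - (if i = k then β else 0)) i)) →
      ∀ i, V i (Y i) =
        V i ((fun i ω => Xstar i ω + (if i = j then β else 0) - (if i = k then β else 0)) i)) := by
  have htransfer : (fun i ω => Xstar i ω + (if i = j then β else 0) - (if i = k then β else 0))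
      = fun i ω => Xstar i ω + ((if i = j then β else 0) - (if i = k then β else 0)) := by
    funext i ω
    ring
  change IsAllocation X _ ∧ IsParetoOptimal V X _
  rw [htransfer]
  exact ⟨IsAllocation.add_const hsum (sum_transfer_eq_zero β j k),
    IsParetoOptimal.add_const hcash hPO (sum_transfer_eq_zero β j k)⟩

/-- Transferring a constant amount `β` from agent `k` to agent `j` in a Pareto optimal
allocation yields another Pareto optimal allocation. -/
theorem stmt_7 {Ω : Type*} (n : ℕ) (X : Ω → ℝ) (b c : Fin n → ℝ)
    (V : Fin n → (Ω → ℝ) → ℝ)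
    (hcash : ∀ (i : Fin n) (Y : Ω → ℝ) (a : ℝ),
      V i (fun ω => Y ω + a) = V i Y + (1 + b i + c i) * a)
    (Xstar : Fin n → Ω → ℝ) (hsum : ∀ ω, ∑ i, Xstar i ω = X ω)
    (hPO : ∀ Y : Fin n → Ω → ℝ, (∀ ω, ∑ i, Y i ω = X ω) →
      (∀ i, V i (Y i) ≤ V i (Xstar i)) → ∀ i, V i (Y i) = V i (Xstar i))
    (β : ℝ) (j k : Fin n) (hjk : j ≠ k) :
    (∀ ω, ∑ i, (fun i ω => Xstar i ω + (if i = j then β else 0) - (if i = k then β else 0)) i ω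
        = X ω) ∧
    (∀ Y : Fin n → Ω → ℝ, (∀ ω, ∑ i, Y i ω = X ω) →
      (∀ i, V i (Y i) ≤
        V i ((fun i ω => Xstar i ω + (if i = j then β else 0) - (if i = k then β else 0)) i)) →
      ∀ i, V i (Y i) =
        V i ((fun i ω => Xstar i ω + (if i = j then β else 0) - (if i = k then β else 0)) i)) :=
  stmt_7_general n X b c V hcash Xstar hsum hPO β j k
end

section
/- For proportional hazards distortions g₁(p) = p^{c₁}, g₂(p) = p^{c₂} with 0 < c₂ < c₁ < 1, the function p ↦ (g₁(p) − p)/(g₂(p) − p) is increasing on (0,1), and its limit as p → 1⁻ equals (1 − c₁)/(1 − c₂). -/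
/-!
By the quotient rule, the derivative of `(p ^ a - p) / (p ^ b - p)` has the sign of
`(a - b) p ^ (a - 1) + (1 - a) p ^ (a - b) - (1 - b)`.
The exponents `a - 1` and `a - b`, weighted by `a - b` and `1 - a`, average to `0`, so strict
convexity of `t ↦ p ^ t = exp (t log p)` makes this positive for `p ≠ 1`. The limit at `1⁻` is
l'Hôpital's rule: both numerator and denominator vanish at `1` with slopes `a - 1` and `b - 1`.
-/

open Set Filter Topology

namespace Real

theorem one_sub_lt_mul_rpow_add_mul_rpow {p a b : ℝ} (hp₀ : 0 < p) (hp₁ : p ≠ 1)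
    (hba : b < a) (ha : a < 1) :
    1 - b < (a - b) * p ^ (a - 1) + (1 - a) * p ^ (a - b) := by
  have hb : 0 < 1 - b := by linarith
  have hlog : log p ≠ 0 := log_ne_zero_of_pos_of_ne_one hp₀ hp₁
  have hconv := strictConvexOn_exp.2 (mem_univ (log p * (a - 1))) (mem_univ (log p * (a - b)))
    (fun h => by linarith [mul_left_cancel₀ hlog h])
    (div_pos (sub_pos.2 hba) hb) (div_pos (sub_pos.2 ha) hb) (by field_simp; ring)
  have hzero :
      (a - b) / (1 - b) * (log p * (a - 1)) + (1 - a) / (1 - b) * (log p * (a - b)) = 0 := by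
    field_simp; ring
  simp only [smul_eq_mul, hzero, exp_zero, ← rpow_def_of_pos hp₀] at hconv
  calc 1 - b < (1 - b) * ((a - b) / (1 - b) * p ^ (a - 1) + (1 - a) / (1 - b) * p ^ (a - b)) :=
        lt_mul_of_one_lt_right hb hconv
    _ = (a - b) * p ^ (a - 1) + (1 - a) * p ^ (a - b) := by field_simp

theorem hasDerivAt_rpow_const_sub_id {p : ℝ} (c : ℝ) (hp : p ≠ 0) :
    HasDerivAt (fun x : ℝ => x ^ c - x) (c * p ^ (c - 1) - 1) p :=
  (hasDerivAt_rpow_const (Or.inl hp)).sub (hasDerivAt_id p)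

theorem rpow_sub_self_div_deriv_numerator_eq {p : ℝ} (hp : 0 < p) (a b : ℝ) :
    (a * p ^ (a - 1) - 1) * (p ^ b - p) - (p ^ a - p) * (b * p ^ (b - 1) - 1) =
      p ^ b * ((a - b) * p ^ (a - 1) + (1 - a) * p ^ (a - b) - (1 - b)) := by
  rw [rpow_sub hp, rpow_sub hp, rpow_sub hp, rpow_one]
  field_simp
  ring

theorem strictMonoOn_rpow_sub_self_div {a b : ℝ} (hba : b < a) (ha : a < 1) :
    StrictMonoOn (fun p : ℝ => (p ^ a - p) / (p ^ b - p)) (Ioo 0 1) := by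
  have hden : ∀ p ∈ Ioo (0 : ℝ) 1, 0 < p ^ b - p := fun p hp =>
    sub_pos.2 (self_lt_rpow_of_lt_one hp.1 hp.2 (hba.trans ha))
  have hderiv : ∀ p ∈ Ioo (0 : ℝ) 1, HasDerivAt (fun p : ℝ => (p ^ a - p) / (p ^ b - p))
      (((a * p ^ (a - 1) - 1) * (p ^ b - p) - (p ^ a - p) * (b * p ^ (b - 1) - 1)) /
        (p ^ b - p) ^ 2) p := fun p hp =>
    (hasDerivAt_rpow_const_sub_id a hp.1.ne').div (hasDerivAt_rpow_const_sub_id b hp.1.ne')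
      (hden p hp).ne'
  refine strictMonoOn_of_deriv_pos (convex_Ioo 0 1)
    (fun p hp => (hderiv p hp).continuousAt.continuousWithinAt) fun p hp => ?_
  rw [interior_Ioo] at hp
  rw [(hderiv p hp).deriv, rpow_sub_self_div_deriv_numerator_eq hp.1]
  have hnum := one_sub_lt_mul_rpow_add_mul_rpow hp.1 hp.2.ne hba ha
  exact div_pos (mul_pos (rpow_pos_of_pos hp.1 b) (sub_pos.2 hnum)) (pow_pos (hden p hp) 2)

theorem tendsto_rpow_sub_self_div_nhdsLT_one {a b : ℝ} (hb : b ≠ 1) :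
    Tendsto (fun p : ℝ => (p ^ a - p) / (p ^ b - p)) (𝓝[<] 1) (𝓝 ((1 - a) / (1 - b))) := by
  have hderiv : ∀ c : ℝ, ∀ᶠ p in 𝓝[<] (1 : ℝ),
      HasDerivAt (fun x : ℝ => x ^ c - x) (c * p ^ (c - 1) - 1) p := fun c =>
    eventually_of_mem (Ioo_mem_nhdsLT zero_lt_one) fun p hp =>
      hasDerivAt_rpow_const_sub_id c hp.1.ne'
  have hvanish : ∀ c : ℝ, Tendsto (fun x : ℝ => x ^ c - x) (𝓝[<] 1) (𝓝 0) := fun c => by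
    simpa using ((hasDerivAt_rpow_const_sub_id c one_ne_zero).continuousAt.tendsto).mono_left
      nhdsWithin_le_nhds
  have hslope : ∀ c : ℝ, Tendsto (fun x : ℝ => c * x ^ (c - 1) - 1) (𝓝[<] 1) (𝓝 (c - 1)) :=
    fun c => by
      have : ContinuousAt (fun x : ℝ => c * x ^ (c - 1) - 1) 1 := by fun_prop (disch := simp)
      simpa using this.tendsto.mono_left nhdsWithin_le_nhds
  have hb' : b - 1 ≠ 0 := sub_ne_zero.2 hb
  rw [← neg_div_neg_eq, neg_sub, neg_sub]
  exact HasDerivAt.lhopital_zero_nhdsLT (hderiv a) (hderiv b)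
    ((hslope b).eventually_ne hb') (hvanish a) (hvanish b) ((hslope a).div (hslope b) hb')

end Real

theorem stmt_13_general (c₁ c₂ : ℝ) (hcc : c₂ < c₁) (hc₁ : c₁ < 1) :
    StrictMonoOn (fun p : ℝ => (p ^ c₁ - p) / (p ^ c₂ - p)) (Ioo (0:ℝ) 1) ∧
      Tendsto (fun p : ℝ => (p ^ c₁ - p) / (p ^ c₂ - p)) (nhdsWithin 1 (Iio (1:ℝ)))
        (nhds ((1 - c₁) / (1 - c₂))) :=
  ⟨Real.strictMonoOn_rpow_sub_self_div hcc hc₁,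
    Real.tendsto_rpow_sub_self_div_nhdsLT_one (hcc.trans hc₁).ne⟩

/-- For proportional hazards distortions `g₁(p) = p^{c₁}`, `g₂(p) = p^{c₂}` with
`0 < c₂ < c₁ < 1`, the ratio `(g₁(p) − p)/(g₂(p) − p)` is increasing on `(0,1)` and
tends to `(1 − c₁)/(1 − c₂)` as `p → 1⁻`. -/
theorem stmt_13 (c₁ c₂ : ℝ) (hc₂ : 0 < c₂) (hcc : c₂ < c₁) (hc₁ : c₁ < 1) :
    StrictMonoOn (fun p : ℝ => (p ^ c₁ - p) / (p ^ c₂ - p)) (Ioo (0:ℝ) 1) ∧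
      Tendsto (fun p : ℝ => (p ^ c₁ - p) / (p ^ c₂ - p)) (nhdsWithin 1 (Iio (1:ℝ)))
        (nhds ((1 - c₁) / (1 - c₂))) :=
  stmt_13_general c₁ c₂ hcc hc₁
end

section
/- Let X be exponentially distributed with rate μ, let g(p) = min(αp, 1), h(p) = min(βp, 1) with α > β > 1, and b, θ ≥ 0 with θ > b, b < θ ≤ (1+b)β − 1, and μB ≥ 1 + ln(β(1+b)/(1+θ)). Then the deductible contract f*(x) = (x − d)₊ with d = (1/μ)ln((1+θ)/(1+b)) minimizes (1+b)H_g(X − f(X)) + (1+θ)E[f(X)] over continuous nondecreasing f with f(0)=0 and 0 ≤ f' ≤ 1, and this f* satisfies the constraint H_h(f*(X)) ≤ B (the constraint does not bind). -/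
open MeasureTheory Set Real

/-!
For a contract `f`, the buyer's objective is a constant plus `∫ Q df` over `(0, ∞)`, where
`Q t = -(1 + b) g(p) + (1 + θ) p` at `p = S_X(t) = e^{-μt}` is the marginal cost of covering
the layer at `t`. Since `Q ≥ 0` on `(0, d]` and `Q ≤ 0` on `(d, ∞)`, and a `1`-Lipschitz
contract has `df ≤ dt` while the deductible has `df = 1_{(d, ∞)} dt`, the deductible collects
all of the negative part of `Q` and none of the positive part. For the constraint,
`h(S_X(t + d)) = min(c e^{-μt}, 1)` with `c = β(1 + b)/(1 + θ) ≥ 1`, whose integral over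
`(0, ∞)` is `(1 + ln c)/μ ≤ B`.
-/

/-- The deductible contract `x ↦ (x − d)₊` as a Stieltjes function. -/
noncomputable def deductibleContract (d : ℝ) : StieltjesFunction ℝ where
  toFun := fun x => max (x - d) 0
  mono' := fun x y h => max_le_max (sub_le_sub_right h d) le_rfl
  right_continuous' := fun x =>
    ((continuous_id.sub continuous_const).max continuous_const).continuousWithinAt

theorem StieltjesFunction.measure_le_volume (f : StieltjesFunction ℝ)
    (hf : ∀ x y : ℝ, x ≤ y → f y - f x ≤ y - x) : f.measure ≤ volume := by
  let g : StieltjesFunction ℝ :=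
    { toFun := fun x => x - f x
      mono' := fun x y hxy => by have := hf x y hxy; dsimp only; linarith
      right_continuous' := fun x => continuousWithinAt_id.sub (f.right_continuous x) }
  have hfg : f + g = StieltjesFunction.id := StieltjesFunction.ext fun x => add_sub_cancel _ _
  calc f.measure ≤ f.measure + g.measure := Measure.le_add_right le_rfl
    _ = volume := by rw [← StieltjesFunction.measure_add, hfg, volume_eq_stieltjes_id]

theorem deductibleContract_measure (d : ℝ) :
    (deductibleContract d).measure = volume.restrict (Ioi d) := by
  refine Measure.ext_of_Ioc _ _ fun a b _ => ?_
  rw [StieltjesFunction.measure_Ioc, Measure.restrict_apply measurableSet_Ioc, Ioc_inter_Ioi,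
    Real.volume_Ioc]
  change ENNReal.ofReal (max (b - d) 0 - max (a - d) 0) = ENNReal.ofReal (b - max a d)
  rcases le_total a d with had | hda
  · rw [max_eq_right (sub_nonpos.2 had), sub_zero, max_eq_right had]
    rcases le_total b d with hbd | hdb
    · rw [max_eq_right (sub_nonpos.2 hbd), ENNReal.ofReal_zero,
        ENNReal.ofReal_of_nonpos (sub_nonpos.2 hbd)]
    · rw [max_eq_left (sub_nonneg.2 hdb)]
  · rw [max_eq_left (sub_nonneg.2 hda), max_eq_left (by linarith), max_eq_left hda,
      sub_sub_sub_cancel_right]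

theorem setIntegral_Ioi_le_of_measure_le {ν : Measure ℝ} (hν : ν ≤ volume) {Q : ℝ → ℝ}
    {a d : ℝ} (had : a ≤ d) (hQ_nonneg : ∀ t ∈ Ioc a d, 0 ≤ Q t)
    (hQ_nonpos : ∀ t ∈ Ioi d, Q t ≤ 0) (hQ : IntegrableOn Q (Ioi d))
    (hQν : IntegrableOn Q (Ioi a) ν) :
    ∫ t in Ioi d, Q t ≤ ∫ t in Ioi a, Q t ∂ν := by
  have h_tail : -∫ t in Ioi d, Q t ∂ν ≤ -∫ t in Ioi d, Q t := by
    rw [← integral_neg, ← integral_neg]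
    refine integral_mono_measure (Measure.restrict_mono subset_rfl hν) ?_ hQ.neg
    exact (ae_restrict_iff' measurableSet_Ioi).2 (ae_of_all _ fun t ht => by
      simpa using hQ_nonpos t ht)
  have h_head : 0 ≤ ∫ t in Ioc a d, Q t ∂ν := setIntegral_nonneg measurableSet_Ioc hQ_nonneg
  rw [← Ioc_union_Ioi_eq_Ioi had, setIntegral_union Ioc_disjoint_Ioi_same measurableSet_Ioi
    (hQν.mono_set Ioc_subset_Ioi_self) (hQν.mono_set (Ioi_subset_Ioi had))]
  linarith

theorem le_mul_exp_neg_mul_iff {μ x y t : ℝ} (hμ : 0 < μ) (hx : 0 < x) (hy : 0 < y) :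
    x ≤ y * exp (-μ * t) ↔ t ≤ 1 / μ * log (y / x) := by
  rw [← div_le_iff₀' hy, ← log_le_iff_le_exp (by positivity), one_div_mul_eq_div,
    le_div_iff₀' hμ, ← neg_le_neg_iff, log_div hy.ne' hx.ne', log_div hx.ne' hy.ne']
  constructor <;> intro h <;> linarith

theorem exp_neg_mul_one_div_mul_log {μ r : ℝ} (hμ : μ ≠ 0) (hr : 0 < r) :
    exp (-μ * (1 / μ * log r)) = r⁻¹ := by
  rw [show -μ * (1 / μ * log r) = -log r by field_simp, exp_neg, exp_log hr]

theorem integral_min_mul_exp_neg_mul_one {μ c : ℝ} (hμ : 0 < μ) (hc : 1 ≤ c) :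
    ∫ t in Ioi 0, min (c * exp (-μ * t)) 1 = (1 + log c) / μ := by
  set t₀ := 1 / μ * log c
  have ht₀ : 0 ≤ t₀ := mul_nonneg (by positivity) (log_nonneg hc)
  have h_iff : ∀ t, 1 ≤ c * exp (-μ * t) ↔ t ≤ t₀ := fun t => by
    rw [le_mul_exp_neg_mul_iff hμ one_pos (by linarith), div_one]
  have h_head : EqOn (fun t => min (c * exp (-μ * t)) 1) 1 (Ioc 0 t₀) := fun t ht =>
    min_eq_right ((h_iff t).2 ht.2)
  have h_tail : EqOn (fun t => min (c * exp (-μ * t)) 1) (fun t => c * exp (-μ * t))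
      (Ioi t₀) := fun t ht =>
    min_eq_left (not_le.1 ((h_iff t).not.2 (not_le.2 ht))).le
  have h_int_tail : IntegrableOn (fun t => c * exp (-μ * t)) (Ioi t₀) :=
    (exp_neg_integrableOn_Ioi t₀ hμ).const_mul c
  have h_exp_t₀ : c * exp (-μ * t₀) = 1 := by
    rw [exp_neg_mul_one_div_mul_log hμ.ne' (by linarith), mul_inv_cancel₀ (by linarith)]
  rw [← Ioc_union_Ioi_eq_Ioi ht₀, setIntegral_union Ioc_disjoint_Ioi_same measurableSet_Ioi
      ((integrableOn_const measure_Ioc_lt_top.ne).congr_fun h_head.symm measurableSet_Ioc)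
      (h_int_tail.congr_fun h_tail.symm measurableSet_Ioi),
    setIntegral_congr_fun measurableSet_Ioc h_head, setIntegral_congr_fun measurableSet_Ioi h_tail,
    integral_const_mul, integral_exp_mul_Ioi (neg_lt_zero.2 hμ)]
  simp only [Pi.one_apply, setIntegral_const, smul_eq_mul, mul_one, volume_real_Ioc, sub_zero,
    max_eq_left ht₀]
  rw [neg_div_neg_eq, mul_div_assoc', h_exp_t₀]
  simp only [t₀]
  field_simp
  ring

def marginalCost (α b θ p : ℝ) : ℝ := -(1 + b) * min (α * p) 1 + (1 + θ) * p

theorem marginalCost_nonneg {α b θ p : ℝ} (hb : 0 ≤ 1 + b) (hp : 1 + b ≤ (1 + θ) * p) :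
    0 ≤ marginalCost α b θ p := by
  have := mul_le_mul_of_nonneg_left (min_le_right (α * p) 1) hb
  unfold marginalCost
  linarith

theorem marginalCost_nonpos {α b θ p : ℝ} (hp₀ : 0 ≤ p) (hp : (1 + θ) * p ≤ 1 + b)
    (hα : 1 + θ ≤ (1 + b) * α) : marginalCost α b θ p ≤ 0 := by
  unfold marginalCost
  rcases le_total (α * p) 1 with h | h
  · rw [min_eq_left h]
    nlinarith
  · rw [min_eq_right h]
    linarith

theorem abs_marginalCost_le {α b θ p : ℝ} (hα : 0 ≤ α) (hb : 0 ≤ 1 + b)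
    (hθ : 0 ≤ 1 + θ) (hp : 0 ≤ p) :
    |marginalCost α b θ p| ≤ ((1 + b) * α + (1 + θ)) * p := by
  have h₀ : 0 ≤ min (α * p) 1 := le_min (mul_nonneg hα hp) zero_le_one
  have h₁ := mul_le_mul_of_nonneg_left (min_le_left (α * p) 1) hb
  have h₂ := mul_nonneg hb h₀
  unfold marginalCost
  rw [abs_le]
  constructor <;> nlinarith

theorem integrableOn_marginalCost_exp {μ α b θ : ℝ} (hμ : 0 < μ) (hα : 0 ≤ α)
    (hb : 0 ≤ 1 + b) (hθ : 0 ≤ 1 + θ) (a : ℝ) :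
    IntegrableOn (fun t => marginalCost α b θ (exp (-μ * t))) (Ioi a) := by
  refine Integrable.mono' ((exp_neg_integrableOn_Ioi a hμ).const_mul ((1 + b) * α + (1 + θ)))
    (Continuous.aestronglyMeasurable (by unfold marginalCost; fun_prop))
    (ae_of_all _ fun t => ?_)
  exact abs_marginalCost_le hα hb hθ (exp_pos _).le

theorem stmt_17_general (μ α β b θ B : ℝ) (hμ : 0 < μ) (hαβ : β < α)
    (hb : 0 ≤ b) (hbθ : b < θ) (hθβ : θ ≤ (1 + b) * β - 1)
    (hB : 1 + Real.log (β * (1 + b) / (1 + θ)) ≤ μ * B)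
    (d : ℝ) (hd : d = (1 / μ) * Real.log ((1 + θ) / (1 + b)))
    (Q : ℝ → ℝ)
    (hQ : ∀ t, Q t = -(1 + b) * min (α * Real.exp (-μ * t)) 1
      + (1 + θ) * Real.exp (-μ * t)) :
    (∀ f : StieltjesFunction ℝ, Continuous f → f 0 = 0 →
        (∀ x y : ℝ, x ≤ y → f y - f x ≤ y - x) →
        IntegrableOn Q (Ioi (0:ℝ)) f.measure →
        (∫ t in Ioi (0:ℝ), Q t ∂(deductibleContract d).measure)
          ≤ ∫ t in Ioi (0:ℝ), Q t ∂f.measure) ∧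
      (∫ t in Ioi (0:ℝ), min (β * Real.exp (-μ * (t + d))) 1) ≤ B := by
  have hb₁ : 0 < 1 + b := by linarith
  have hθ₁ : 0 < 1 + θ := by linarith
  have hd₀ : 0 ≤ d :=
    hd ▸ mul_nonneg (by positivity) (log_nonneg ((one_le_div hb₁).2 (by linarith)))
  have hθα : 1 + θ ≤ (1 + b) * α := by nlinarith
  have hα₀ : 0 ≤ α := (pos_of_mul_pos_right (hθ₁.trans_le hθα) hb₁.le).le
  have hd_iff : ∀ t, 1 + b ≤ (1 + θ) * exp (-μ * t) ↔ t ≤ d := fun t =>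
    hd ▸ le_mul_exp_neg_mul_iff hμ hb₁ hθ₁
  obtain rfl : Q = fun t => marginalCost α b θ (exp (-μ * t)) := funext hQ
  refine ⟨fun f _ _ hf hf_int => ?_, ?_⟩
  · rw [deductibleContract_measure, Measure.restrict_restrict measurableSet_Ioi, Ioi_inter_Ioi,
      sup_eq_right.2 hd₀]
    refine setIntegral_Ioi_le_of_measure_le (f.measure_le_volume hf) hd₀
      (fun t ht => marginalCost_nonneg hb₁.le ((hd_iff t).2 ht.2))
      (fun t ht => marginalCost_nonpos (exp_pos _).le
        (not_le.1 ((hd_iff t).not.2 (not_le.2 ht))).le hθα)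
      (integrableOn_marginalCost_exp hμ hα₀ hb₁.le hθ₁.le d) hf_int
  · have h_exp_d : exp (-μ * d) = (1 + b) / (1 + θ) := by
      rw [hd, exp_neg_mul_one_div_mul_log hμ.ne' (by positivity), inv_div]
    have h_shift : ∀ t, β * exp (-μ * (t + d)) = β * (1 + b) / (1 + θ) * exp (-μ * t) := by
      intro t
      rw [mul_add, exp_add, h_exp_d]
      ring
    simp_rw [h_shift]
    rw [integral_min_mul_exp_neg_mul_one hμ ((one_le_div hθ₁).2 (by linarith)),
      div_le_iff₀' hμ]
    exact hB

/-- Case 2a of the constrained buyer's problem: for `X ~ Exp(μ)`, AVaR distortions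
`g(p)=min(αp,1)`, `h(p)=min(βp,1)` with `α > β > 1`, `b < θ ≤ (1+b)β − 1` and
`μB ≥ 1 + ln(β(1+b)/(1+θ))`, the deductible contract with
`d = (1/μ) ln((1+θ)/(1+b))` minimizes the buyer's objective, and the regulator's
constraint `H_h(f*(X)) ≤ B` is not binding. -/
theorem stmt_17 (μ α β b θ B : ℝ) (hμ : 0 < μ) (hβ : 1 < β) (hαβ : β < α)
    (hb : 0 ≤ b) (hbθ : b < θ) (hθβ : θ ≤ (1 + b) * β - 1)
    (hB : 1 + Real.log (β * (1 + b) / (1 + θ)) ≤ μ * B)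
    (d : ℝ) (hd : d = (1 / μ) * Real.log ((1 + θ) / (1 + b)))
    (Q : ℝ → ℝ)
    (hQ : ∀ t, Q t = -(1 + b) * min (α * Real.exp (-μ * t)) 1
      + (1 + θ) * Real.exp (-μ * t)) :
    (∀ f : StieltjesFunction ℝ, Continuous f → f 0 = 0 →
        (∀ x y : ℝ, x ≤ y → f y - f x ≤ y - x) →
        IntegrableOn Q (Ioi (0:ℝ)) f.measure →
        (∫ t in Ioi (0:ℝ), Q t ∂(deductibleContract d).measure)
          ≤ ∫ t in Ioi (0:ℝ), Q t ∂f.measure) ∧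
      (∫ t in Ioi (0:ℝ), min (β * Real.exp (-μ * (t + d))) 1) ≤ B :=
  stmt_17_general μ α β b θ B hμ hαβ hb hbθ hθβ hB d hd Q hQ
end
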